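/- For every set I ⊆ ℕ and every j ≥ 1, A[I]^(j) ⊆ B_2^j. -/

import Mathlib

/-- Shortlex order on strings: first by length, then lexicographically. -/
def ShortlexLt {σ : Type*} [LinearOrder σ] (x y : List σ) : Prop :=
  x.length < y.length ∨ (x.length = y.length ∧ List.Lex (· < ·) x y)

/-- `y` is the `j`-th `A`-extension of `x`: `y ∈ A_x` and exactly `j - 1`
elements of `A_x = {z | x ++ z ∈ A}` are shortlex-smaller than `y`. -/
def IsNthExt {σ : Type*} [LinearOrder σ] (A : Set (List σ)) (j : ℕ) (x y : List σ) : Prop :=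
  x ++ y ∈ A ∧ {z | x ++ z ∈ A ∧ ShortlexLt z y}.encard = ((j - 1 : ℕ) : ℕ∞)

/-- `A^(j)`: the set of all `j`-th `A`-extensions. -/
def ExtSet {σ : Type*} [LinearOrder σ] (A : Set (List σ)) (j : ℕ) : Set (List σ) :=
  {y | ∃ x, IsNthExt A j x y}

/-- `I' = {3i : i ∈ ℕ} ∪ {3i+1 : i ∈ I} ∪ {3i+2 : i ∈ ℕ \\ I}`. -/
def Iext (I : Set ℕ) : Set ℕ :=
  {k | (∃ i : ℕ, k = 3 * i) ∨ (∃ i ∈ I, k = 3 * i + 1) ∨ (∃ i : ℕ, i ∉ I ∧ k = 3 * i + 2)}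

/-- The language `A[I] = {0^n : n ∈ I'}` of Construction 4.1. -/
def AofI (I : Set ℕ) : Set (List (Fin 1)) :=
  {w | ∃ n ∈ Iext I, w = List.replicate n 0}

/-- The languages `B_2^j` of Construction 4.4 (over the one-letter alphabet). -/
def B2 : ℕ → Language (Fin 1)
  | 0 => 0
  | 1 => {[], [0]}
  | 2 => {[0], [0, 0], [0, 0, 0]}
  | (n + 3) => if (n + 3) % 2 = 0 then B2 (n + 2) * {[0, 0]} else B2 (n + 2) * {[0]}

/-! Each block `{3i, 3i+1, 3i+2}` meets `I'` in exactly two points, so the counting function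
`N n = |I' ∩ [0, n)|` satisfies `2n - 1 ≤ 3 N n ≤ 2n + 2`, and even `3 N n ≤ 2n + 1` when `n ∈ I'`.
Over a one-letter alphabet shortlex order is comparison of lengths, so the `j`-th extension of `0^m`
is `0^ℓ` with `m + ℓ ∈ I'` and `N (m + ℓ) - N m = j - 1`. The bounds give `3j - 5 ≤ 2ℓ ≤ 3j`, and
every such `ℓ` lies in `[j + ⌊j/2⌋ - 2, j + ⌊j/2⌋]`, the set of lengths making up `B_2^j`. -/

theorem List.eq_replicate_length_of_subsingleton {α : Type*} [Subsingleton α] (a : α)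
    (l : List α) : l = List.replicate l.length a :=
  List.eq_replicate_length.2 fun _ _ => Subsingleton.elim _ _

theorem List.length_lt_of_lex_of_subsingleton {α : Type*} [Subsingleton α] {r : α → α → Prop}
    [Std.Irrefl r] {l₁ l₂ : List α} (h : List.Lex r l₁ l₂) : l₁.length < l₂.length := by
  induction h with
  | nil => simp
  | @rel a _ b _ h => exact absurd h (by rw [Subsingleton.elim a b]; exact irrefl b)
  | cons _ ih => simpa using ih

theorem shortlexLt_iff_length_lt {σ : Type*} [LinearOrder σ] [Subsingleton σ] {z y : List σ} :
    ShortlexLt z y ↔ z.length < y.length := by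
  refine ⟨?_, Or.inl⟩
  rintro (h | ⟨-, h⟩)
  exacts [h, List.length_lt_of_lex_of_subsingleton h]

theorem isNthExt_iff_count {S : Set ℕ} [DecidablePred (· ∈ S)] {j : ℕ} {x y : List (Fin 1)} :
    IsNthExt {w | w.length ∈ S} j x y ↔
      x.length + y.length ∈ S ∧ Nat.count (fun k => x.length + k ∈ S) y.length = j - 1 := by
  have hshorter : {z : List (Fin 1) | x ++ z ∈ {w | w.length ∈ S} ∧ ShortlexLt z y} =
      (List.replicate · 0) '' ↑{k ∈ Finset.range y.length | x.length + k ∈ S} := by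
    ext z
    constructor
    · intro hz
      refine ⟨z.length, ?_, (z.eq_replicate_length_of_subsingleton 0).symm⟩
      simp_all [shortlexLt_iff_length_lt]
    · rintro ⟨k, hk, rfl⟩
      simp_all [shortlexLt_iff_length_lt]
  have hinj : Function.Injective (List.replicate · (0 : Fin 1)) := fun a b hab => by
    simpa using congrArg List.length hab
  rw [IsNthExt, hshorter, hinj.encard_image, Set.encard_coe_eq_coe_finsetCard,
    ← Nat.count_eq_card_filter_range, Nat.cast_inj]
  simp

theorem AofI_eq_setOf_length_mem (I : Set ℕ) : AofI I = {w | w.length ∈ Iext I} := by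
  ext w
  constructor
  · rintro ⟨n, hn, rfl⟩
    simpa using hn
  · exact fun h => ⟨w.length, h, w.eq_replicate_length_of_subsingleton 0⟩

theorem three_mul_mem_Iext (I : Set ℕ) (i : ℕ) : 3 * i ∈ Iext I :=
  Or.inl ⟨i, rfl⟩

theorem three_mul_add_one_mem_Iext_iff {I : Set ℕ} {i : ℕ} : 3 * i + 1 ∈ Iext I ↔ i ∈ I := by
  refine ⟨?_, fun hi => Or.inr (Or.inl ⟨i, hi, rfl⟩)⟩
  rintro (⟨k, hk⟩ | ⟨k, hk, hik⟩ | ⟨k, -, hik⟩)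
  · omega
  · rwa [show i = k by omega]
  · omega

theorem three_mul_add_two_mem_Iext_iff {I : Set ℕ} {i : ℕ} : 3 * i + 2 ∈ Iext I ↔ i ∉ I := by
  refine ⟨?_, fun hi => Or.inr (Or.inr ⟨i, hi, rfl⟩)⟩
  rintro (⟨k, hk⟩ | ⟨k, -, hik⟩ | ⟨k, hk, hik⟩)
  · omega
  · omega
  · rwa [show i = k by omega]

section count

variable (I : Set ℕ) [DecidablePred (· ∈ Iext I)]

theorem count_Iext_three_mul (q : ℕ) : Nat.count (· ∈ Iext I) (3 * q) = 2 * q := by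
  induction q with
  | zero => rfl
  | succ q ih =>
    rw [show 3 * (q + 1) = 3 * q + 2 + 1 by ring, Nat.count_succ, Nat.count_succ, Nat.count_succ,
      ih]
    by_cases hq : q ∈ I <;>
      simp [hq, three_mul_mem_Iext, three_mul_add_one_mem_Iext_iff,
        three_mul_add_two_mem_Iext_iff] <;> omega

theorem count_Iext_bounds (n : ℕ) :
    2 * n ≤ 3 * Nat.count (· ∈ Iext I) n + 1 ∧ 3 * Nat.count (· ∈ Iext I) n ≤ 2 * n + 2 ∧
      (n ∈ Iext I → 3 * Nat.count (· ∈ Iext I) n ≤ 2 * n + 1) := by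
  obtain ⟨q, r, hr, rfl⟩ : ∃ q r, r < 3 ∧ n = 3 * q + r :=
    ⟨n / 3, n % 3, Nat.mod_lt _ (by norm_num), (Nat.div_add_mod n 3).symm⟩
  interval_cases r
  · simp only [add_zero, count_Iext_three_mul]
    omega
  · rw [Nat.count_succ, count_Iext_three_mul]
    simp only [three_mul_mem_Iext, if_true]
    omega
  · rw [Nat.count_succ, Nat.count_succ, count_Iext_three_mul]
    by_cases hq : q ∈ I <;>
      simp [hq, three_mul_mem_Iext, three_mul_add_one_mem_Iext_iff,
        three_mul_add_two_mem_Iext_iff] <;> omega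

end count

theorem Language.replicate_add_mem_mul_singleton {α : Type*} {L : Language α} {a : α} {k m : ℕ}
    (h : List.replicate k a ∈ L) : List.replicate (k + m) a ∈ L * {List.replicate m a} := by
  rw [List.replicate_add]
  exact Language.append_mem_mul h rfl

-- For `j = 1` the truncated lower bound `j + j / 2 - 2` is `0`, matching `B_2^1 = {λ, 0}`.
theorem replicate_mem_B2 {j ℓ : ℕ} (hj : 1 ≤ j) (hlo : j + j / 2 - 2 ≤ ℓ) (hhi : ℓ ≤ j + j / 2) :
    List.replicate ℓ 0 ∈ B2 j := by
  obtain ⟨n, rfl⟩ := Nat.exists_eq_add_of_le' hj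
  induction n generalizing ℓ with
  | zero =>
    change _ ∈ ({[], [0]} : Set (List (Fin 1)))
    interval_cases ℓ <;> simp
  | succ n ih =>
    rcases n with _ | n
    · change _ ∈ ({[0], [0, 0], [0, 0, 0]} : Set (List (Fin 1)))
      interval_cases ℓ <;> simp
    · rw [B2]
      split_ifs
      · obtain ⟨k, rfl⟩ : ∃ k, ℓ = k + 2 := ⟨ℓ - 2, by omega⟩
        exact Language.replicate_add_mem_mul_singleton (m := 2) (ih (by omega) (by omega) (by omega))
      · obtain ⟨k, rfl⟩ : ∃ k, ℓ = k + 1 := ⟨ℓ - 1, by omega⟩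
        exact Language.replicate_add_mem_mul_singleton (m := 1) (ih (by omega) (by omega) (by omega))

/-- For every `I ⊆ ℕ` and every `j ≥ 1`, `A[I]^(j) ⊆ B_2^j`. -/
theorem stmt10 (I : Set ℕ) (j : ℕ) (hj : 1 ≤ j) :
    ExtSet (AofI I) j ⊆ B2 j := by
  classical
  rintro y ⟨x, hxy⟩
  rw [AofI_eq_setOf_length_mem, isNthExt_iff_count] at hxy
  obtain ⟨hmem, hcount⟩ := hxy
  have hsplit := Nat.count_add (· ∈ Iext I) x.length y.length
  rw [hcount] at hsplit
  obtain ⟨hlo₁, hhi₁, -⟩ := count_Iext_bounds I x.length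
  obtain ⟨hlo₂, -, hhi₂⟩ := count_Iext_bounds I (x.length + y.length)
  specialize hhi₂ hmem
  rw [y.eq_replicate_length_of_subsingleton 0]
  exact replicate_mem_B2 hj (by omega) (by omega)
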